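/- Fix λ ∈ ℝ and real numbers L₁(λ), …, L_{n+1}(λ) with Lᵢ(λ) ≤ B for all i. Let w₁,…,wₙ ∈ [0,1], N_w = Σᵢ wᵢ, w̃ᵢ = wᵢ/(N_w+1) for i ∈ [n], and w̃_{n+1} = 1/(N_w+1). For any k ∈ [n+1], define the swapped weighted risk R̂_{n+1}(λ; Z^k) = Σ_{i∈[n], i≠k} w̃ᵢ Lᵢ(λ) + w̃ₖ L_{n+1}(λ) + w̃_{n+1} Lₖ(λ) (interpreted as the unswapped risk when k = n+1). Then R̂_{n+1}(λ; Z^k) ≤ (N_w/(N_w+1)) · R̂ₙ(λ) + B/(N_w+1), where R̂ₙ(λ) = (1/N_w) Σ_{i=1}^n wᵢ Lᵢ(λ). -/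
import Mathlib


open Finset

/-- The swapped weighted risk `R̂_{n+1}(λ; Z^k)` (where positions `k` and `n+1` are
swapped) is bounded by `(N_w/(N_w+1)) R̂ₙ(λ) + B/(N_w+1)`. The swap is expressed via
`Equiv.swap k (Fin.last n)`. -/
theorem swapped_risk_bound (n : ℕ) (hn : 0 < n)
    (B : ℝ) (L : Fin (n + 1) → ℝ) (hL : ∀ i, L i ≤ B)
    (w : Fin n → ℝ) (hw : ∀ i, 0 ≤ w i ∧ w i ≤ 1)
    (Nw : ℝ) (hNw : Nw = ∑ i, w i) (hNwpos : 0 < Nw)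
    (wt : Fin (n + 1) → ℝ)
    (hwt : ∀ i : Fin n, wt i.castSucc = w i / (Nw + 1))
    (hwtLast : wt (Fin.last n) = 1 / (Nw + 1))
    (Rn : ℝ) (hRn : Rn = (1 / Nw) * ∑ i : Fin n, w i * L i.castSucc)
    (k : Fin (n + 1)) :
    (∑ i, wt i * L (Equiv.swap k (Fin.last n) i)) ≤
      (Nw / (Nw + 1)) * Rn + B / (Nw + 1) := by
  have hNw1 : (0:ℝ) < Nw + 1 := by linarith
  set S := ∑ i : Fin n, w i * L i.castSucc with hS
  have hRHS : (Nw / (Nw + 1)) * Rn + B / (Nw + 1) = (S + B) / (Nw + 1) := by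
    rw [hRn]; field_simp
  rw [hRHS, Fin.sum_univ_castSucc]
  by_cases hk : k = Fin.last n
  · subst hk
    simp only [Equiv.swap_self, Equiv.refl_apply]
    have h1 : ∑ i : Fin n, wt i.castSucc * L i.castSucc = S / (Nw + 1) := by
      rw [Finset.sum_div]
      exact Finset.sum_congr rfl fun i _ => by rw [hwt i]; ring
    rw [h1, hwtLast]
    have hB := hL (Fin.last n)
    have h2 : S / (Nw + 1) + 1 / (Nw + 1) * L (Fin.last n)
        = (S + L (Fin.last n)) / (Nw + 1) := by field_simp
    rw [h2, div_le_div_iff₀ hNw1 hNw1]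
    nlinarith
  · obtain ⟨j, hj⟩ : ∃ j : Fin n, j.castSucc = k := by
      rcases Fin.eq_castSucc_or_eq_last k with ⟨j, hj⟩ | h
      · exact ⟨j, hj.symm⟩
      · exact absurd h hk
    have hklast : k ≠ Fin.last n := hk
    have hA : ∑ i : Fin n, wt i.castSucc * L (Equiv.swap k (Fin.last n) i.castSucc)
        = (∑ i ∈ univ.erase j, w i * L i.castSucc) / (Nw + 1)
          + w j / (Nw + 1) * L (Fin.last n) := by
      rw [← Finset.add_sum_erase _ _ (Finset.mem_univ j), Finset.sum_div]
      have hjswap : Equiv.swap k (Fin.last n) j.castSucc = Fin.last n := by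
        rw [hj, Equiv.swap_apply_left]
      rw [hjswap, hwt j, add_comm]
      congr 1
      refine Finset.sum_congr rfl fun i hi => ?_
      have hij : i ≠ j := (Finset.mem_erase.mp hi).1
      have h1 : i.castSucc ≠ k := by
        rw [← hj]; exact fun h => hij (Fin.castSucc_injective n h)
      have h2 : i.castSucc ≠ Fin.last n := Fin.castSucc_lt_last i |>.ne
      rw [Equiv.swap_apply_of_ne_of_ne h1 h2, hwt i]
      ring
    have hSsplit : S = w j * L j.castSucc + ∑ i ∈ univ.erase j, w i * L i.castSucc :=
      (Finset.add_sum_erase _ _ (Finset.mem_univ j)).symm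
    rw [hA, Equiv.swap_apply_right, hwtLast]
    set A := ∑ i ∈ univ.erase j, w i * L i.castSucc
    have hwj := hw j
    have hBk := hL j.castSucc
    have hBl := hL (Fin.last n)
    rw [hj] at hSsplit hBk
    have key : w j * L (Fin.last n) + L k ≤ w j * L k + B := by nlinarith
    have : A / (Nw + 1) + w j / (Nw + 1) * L (Fin.last n) + 1 / (Nw + 1) * L k
        = (A + w j * L (Fin.last n) + L k) / (Nw + 1) := by field_simp
    rw [this, hSsplit, div_le_div_iff₀ hNw1 hNw1]
    nlinarith
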